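/- arXiv:2211.10034 — 3 statements merged into one kernel-verified Lean document; each statement's English description precedes it below -/
import Mathlib

section
/- Let n ≥ 1 and d ≥ 2 be integers, A the closed unit ball in ℝⁿ, f(x) = |x₂ - x₁^d| + … + |xₙ - x_{n-1}^d| + |xₙ^d|, and g(x) = ‖x‖. Then f⁻¹(0) ∩ A = g⁻¹(0) ∩ A = {0}, and there is no exponent ρ < d^n and constant c such that |g(x)|^ρ ≤ c·|f(x)| holds for all x ∈ A; i.e., the Łojasiewicz exponent of (f, g) on A is at least d^n. -/
/-!
`f x` vanishes exactly when `x` is a chain `x_{i+1} = x_i ^ d` with `x_n ^ d = 0`, which forces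
`x = 0` from the last coordinate back. Along the curve `x_i = t ^ d ^ i` every term but the last
vanishes, so `f = t ^ d ^ n` while `‖x‖ ≥ t`; hence `‖x‖ ^ ρ ≤ c |f x|` for small `t > 0` forces
`ρ ≥ d ^ n`.
-/

open Filter Topology

section PowChain

variable {R : Type*} [Ring R] [LinearOrder R] [IsStrictOrderedRing R] {n : ℕ}

def powChainDefect (d : ℕ) (x : Fin n → R) : R :=
  ∑ i : Fin n, if h : (i : ℕ) + 1 < n then |x ⟨(i : ℕ) + 1, h⟩ - x i ^ d| else |x i ^ d|

theorem powChainDefect_eq_zero_iff {d : ℕ} (hd : d ≠ 0) {x : Fin n → R} :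
    powChainDefect d x = 0 ↔ x = 0 := by
  refine ⟨fun hx => ?_, fun hx => by simp [powChainDefect, hx, zero_pow hd]⟩
  obtain _ | m := n
  · exact Subsingleton.elim _ _
  have hterm := (Finset.sum_eq_zero_iff_of_nonneg fun i _ => by
    split <;> exact abs_nonneg _).mp hx
  have hlast : x (Fin.last m) ^ d = 0 := by
    simpa using hterm (Fin.last m) (Finset.mem_univ _)
  have hstep (i : Fin m) : x i.succ = x i.castSucc ^ d := by
    have := hterm i.castSucc (Finset.mem_univ _)
    rw [dif_pos (by simp)] at this
    exact sub_eq_zero.mp (abs_eq_zero.mp this)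
  funext i
  induction i using Fin.reverseInduction with
  | last => exact pow_eq_zero_iff hd |>.mp hlast
  | cast i ih => exact pow_eq_zero_iff hd |>.mp ((hstep i).symm.trans ih)

theorem powChainDefect_pow_pow (d : ℕ) (hn : n ≠ 0) (t : R) :
    powChainDefect d (fun i : Fin n => t ^ d ^ (i : ℕ)) = |t ^ d ^ n| := by
  obtain _ | m := n
  · exact absurd rfl hn
  rw [powChainDefect, Fin.sum_univ_castSucc, Finset.sum_eq_zero fun i _ => ?_] <;>
    simp [← pow_mul, pow_succ]

end PowChain

noncomputable def powCurve (d n : ℕ) (t : ℝ) : EuclideanSpace ℝ (Fin n) :=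
  WithLp.toLp 2 fun i => t ^ d ^ (i : ℕ)

theorem tendsto_powCurve_zero {d : ℕ} (hd : d ≠ 0) (n : ℕ) :
    Tendsto (powCurve d n) (𝓝 0) (𝓝 0) := by
  have hcont : Continuous (powCurve d n) :=
    (PiLp.continuous_toLp 2 _).comp (continuous_pi fun i => continuous_pow _)
  have hzero : powCurve d n 0 = 0 := by
    ext i
    simp [powCurve, zero_pow (pow_ne_zero _ hd)]
  exact hzero ▸ hcont.tendsto 0

theorem abs_le_norm_powCurve (d : ℕ) {n : ℕ} (hn : n ≠ 0) (t : ℝ) :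
    |t| ≤ ‖powCurve d n t‖ := by
  simpa [powCurve] using PiLp.norm_apply_le (powCurve d n t) ⟨0, Nat.pos_of_ne_zero hn⟩

theorem le_of_eventually_rpow_le_mul_rpow {a b c : ℝ}
    (h : ∀ᶠ t in 𝓝[>] 0, t ^ a ≤ c * t ^ b) : b ≤ a := by
  by_contra! hab
  have hlim : Tendsto (fun t : ℝ => c * t ^ (b - a)) (𝓝[>] 0) (𝓝 0) := by
    have := (Real.continuousAt_rpow_const 0 (b - a) (.inr (sub_pos.2 hab).le)).tendsto
    simpa [Real.zero_rpow (sub_pos.2 hab).ne'] using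
      tendsto_nhdsWithin_of_tendsto_nhds (this.const_mul c)
  obtain ⟨t, ht, hsmall, ht0⟩ :=
    (h.and ((hlim.eventually (gt_mem_nhds one_pos)).and self_mem_nhdsWithin)).exists
  have hta : 0 < t ^ a := Real.rpow_pos_of_pos ht0 a
  have : c * t ^ b = c * t ^ (b - a) * t ^ a := by
    rw [mul_assoc, ← Real.rpow_add ht0, sub_add_cancel]
  nlinarith

theorem stmt_3 (n d : ℕ) (hn : 1 ≤ n) (hd : 2 ≤ d)
    (A : Set (EuclideanSpace ℝ (Fin n)))
    (hAdef : A = Metric.closedBall 0 1)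
    (f : EuclideanSpace ℝ (Fin n) → ℝ)
    (hfdef : ∀ x, f x = ∑ i : Fin n,
      (if h : (i : ℕ) + 1 < n then |x ⟨(i : ℕ) + 1, h⟩ - (x i) ^ d| else |(x i) ^ d|)) :
    ({x ∈ A | f x = 0} = {0} ∧ {x ∈ A | ‖x‖ = 0} = {0}) ∧
    ¬ ∃ ρ : ℝ, ρ < (d : ℝ) ^ n ∧ ∃ c : ℝ, ∀ x ∈ A, ‖x‖ ^ ρ ≤ c * |f x| := by
  have hd0 : d ≠ 0 := by omega
  have hn0 : n ≠ 0 := by omega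
  have hf (x : EuclideanSpace ℝ (Fin n)) : f x = powChainDefect d x.ofLp := hfdef x
  subst hAdef
  refine ⟨⟨?_, ?_⟩, ?_⟩
  · ext x
    simp +contextual [hf, powChainDefect_eq_zero_iff hd0]
  · ext x
    simp +contextual
  rintro ⟨ρ, hρ, c, hc⟩
  -- `ρ' ≥ 0` makes `t ↦ t ^ ρ'` monotone, and `‖x‖ ^ ρ' ≤ ‖x‖ ^ ρ` on the unit ball.
  set ρ' := max ρ 0
  suffices (d : ℝ) ^ n ≤ ρ' from this.not_gt (max_lt hρ (by positivity))
  refine le_of_eventually_rpow_le_mul_rpow (c := c) ?_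
  have hsmall : ∀ᶠ t in 𝓝[>] 0, ‖powCurve d n t‖ ≤ 1 := tendsto_nhdsWithin_of_tendsto_nhds
    (tendsto_powCurve_zero hd0 n) |>.norm.eventually (ge_mem_nhds (by simp))
  filter_upwards [hsmall, self_mem_nhdsWithin] with t hle (ht : 0 < t)
  have hge : t ≤ ‖powCurve d n t‖ := by
    simpa [abs_of_pos ht] using abs_le_norm_powCurve d hn0 t
  calc t ^ ρ' ≤ ‖powCurve d n t‖ ^ ρ' := Real.rpow_le_rpow ht.le hge (le_max_right _ _)
    _ ≤ ‖powCurve d n t‖ ^ ρ := Real.rpow_le_rpow_of_exponent_ge (ht.trans_le hge) hle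
        (le_max_left _ _)
    _ ≤ c * |f (powCurve d n t)| := hc _ (by simpa using hle)
    _ = c * t ^ ((d : ℝ) ^ n) := by
        rw [hf, powCurve, powChainDefect_pow_pow d hn0, abs_abs, abs_of_pos (by positivity),
          ← Real.rpow_natCast]
        norm_cast
end

section
/- Let P ∈ ℝ[X] be a univariate polynomial and let σ be an assignment of signs (in {-1, 0, 1}) to each of P, P', P'', …, P^{(deg P)}. Then the set of x ∈ ℝ at which every derivative P^{(j)} has sign σ(P^{(j)}) is either empty, a single point, or an open interval (in particular, it is connected). -/
open Polynomial Set SignType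

/-!
Induction on the number of derivatives. The realization for `P` is the realization `T` for the
derivatives of `P'`, intersected with `{sign P = σ 0}`. Inductively `T` is at most a point or an
open interval; in the latter case `P'` has constant sign on `T`, so `P` is strictly monotone,
strictly antitone or constant on `T`. A strictly monotone function vanishes at most once, and
`{x ∈ T | sign P x = ±1}` is open by continuity and an interval by monotonicity.
-/

section SignSets

variable {f : ℝ → ℝ} {T : Set ℝ}

lemma isOpen_inter_setOf_sign_eq (hT : IsOpen T) (hf : ContinuousOn f T) {s : SignType}
    (hs : s ≠ 0) : IsOpen (T ∩ {x | sign (f x) = s}) := by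
  cases s with
  | zero => exact absurd rfl hs
  | neg =>
    simp only [neg_eq_neg_one, sign_eq_neg_one_iff]
    exact hf.isOpen_inter_preimage hT isOpen_Iio
  | pos =>
    simp only [pos_eq_one, sign_eq_one_iff]
    exact hf.isOpen_inter_preimage hT isOpen_Ioi

lemma Set.OrdConnected.inter_setOf_sign_eq (hT : T.OrdConnected)
    (hf : MonotoneOn f T ∨ AntitoneOn f T) (s : SignType) :
    (T ∩ {x | sign (f x) = s}).OrdConnected := by
  have hsign : Monotone (sign : ℝ → SignType) := OrderHom.monotone sign
  obtain ⟨u, hu, hTu⟩ := hf.elim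
    (fun h => ordConnected_singleton.preimage_monotoneOn (hsign.comp_monotoneOn h))
    (fun h => ordConnected_singleton.preimage_antitoneOn (hsign.comp_antitoneOn h))
  exact hTu ▸ hT.inter hu

lemma subsingleton_or_isOpen_ordConnected_of_strictMonoOn (hT : IsOpen T)
    (hT' : T.OrdConnected) (hf : ContinuousOn f T) (hmono : StrictMonoOn f T ∨ StrictAntiOn f T)
    (s : SignType) :
    (T ∩ {x | sign (f x) = s}).Subsingleton ∨
      IsOpen (T ∩ {x | sign (f x) = s}) ∧ (T ∩ {x | sign (f x) = s}).OrdConnected := by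
  by_cases hs : s = 0
  · left
    rintro x ⟨hxT, hx⟩ y ⟨hyT, hy⟩
    have hfx : f x = 0 := sign_eq_zero_iff.mp (hs ▸ hx)
    have hfy : f y = 0 := sign_eq_zero_iff.mp (hs ▸ hy)
    exact hmono.elim StrictMonoOn.injOn StrictAntiOn.injOn hxT hyT (hfx.trans hfy.symm)
  · exact Or.inr ⟨isOpen_inter_setOf_sign_eq hT hf hs,
      hT'.inter_setOf_sign_eq (hmono.imp StrictMonoOn.monotoneOn StrictAntiOn.antitoneOn) s⟩

lemma subsingleton_or_isOpen_ordConnected_of_sign_deriv_eq (hT : IsOpen T)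
    (hT' : T.OrdConnected) (hf : DifferentiableOn ℝ f T) {τ : SignType}
    (hτ : ∀ x ∈ T, sign (deriv f x) = τ) (s : SignType) :
    (T ∩ {x | sign (f x) = s}).Subsingleton ∨
      IsOpen (T ∩ {x | sign (f x) = s}) ∧ (T ∩ {x | sign (f x) = s}).OrdConnected := by
  have hT_int : interior T = T := hT.interior_eq
  cases τ with
  | zero =>
    have hconst : ∀ x ∈ T, ∀ y ∈ T, f x = f y := fun x hx y hy =>
      hT.is_const_of_deriv_eq_zero hT'.isPreconnected hf
        (fun z hz => sign_eq_zero_iff.mp (hτ z hz)) hx hy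
    right
    rcases (T ∩ {x | sign (f x) = s}).eq_empty_or_nonempty with hempty | ⟨a, haT, ha⟩
    · exact hempty ▸ ⟨isOpen_empty, ordConnected_empty⟩
    · have hall : T ∩ {x | sign (f x) = s} = T :=
        inter_eq_left.mpr fun x hx => (hconst a haT x hx ▸ ha : sign (f x) = s)
      rw [hall]
      exact ⟨hT, hT'⟩
  | neg =>
    refine subsingleton_or_isOpen_ordConnected_of_strictMonoOn hT hT' hf.continuousOn
      (Or.inr (strictAntiOn_of_deriv_neg hT'.convex hf.continuousOn fun x hx => ?_)) s
    exact sign_eq_neg_one_iff.mp (hτ x (hT_int ▸ hx))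
  | pos =>
    refine subsingleton_or_isOpen_ordConnected_of_strictMonoOn hT hT' hf.continuousOn
      (Or.inl (strictMonoOn_of_deriv_pos hT'.convex hf.continuousOn fun x hx => ?_)) s
    exact sign_eq_one_iff.mp (hτ x (hT_int ▸ hx))

end SignSets

namespace Polynomial

def signRealization (P : ℝ[X]) (σ : ℕ → SignType) (n : ℕ) : Set ℝ :=
  {x | ∀ j ≤ n, sign ((derivative^[j] P).eval x) = σ j}

variable {P : ℝ[X]} {σ : ℕ → SignType} {n : ℕ}

lemma signRealization_zero : signRealization P σ 0 = {x | sign (P.eval x) = σ 0} := by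
  simp [signRealization]

lemma signRealization_succ : signRealization P σ (n + 1) =
    signRealization (derivative P) (fun j => σ (j + 1)) n ∩ {x | sign (P.eval x) = σ 0} := by
  ext x
  simp only [signRealization, mem_inter_iff, mem_ofPred_eq, ← Nat.lt_succ_iff,
    Nat.forall_lt_succ_left, Function.iterate_zero_apply, Function.iterate_succ_apply]
  exact and_comm

lemma sign_deriv_eval_of_mem_signRealization {x : ℝ}
    (hx : x ∈ signRealization (derivative P) σ n) :
    sign (deriv (fun y => P.eval y) x) = σ 0 := by
  simpa using hx 0 n.zero_le

theorem signRealization_subsingleton_or_isOpen_ordConnected (hP : P.natDegree ≤ n) :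
    (signRealization P σ n).Subsingleton ∨
      IsOpen (signRealization P σ n) ∧ (signRealization P σ n).OrdConnected := by
  induction n generalizing P σ with
  | zero =>
    obtain ⟨c, rfl⟩ := natDegree_eq_zero.mp (Nat.le_zero.mp hP)
    right
    by_cases hc : sign c = σ 0 <;>
      simp [signRealization_zero, hc, ordConnected_univ, ordConnected_empty]
  | succ n ih =>
    have hP' : (derivative P).natDegree ≤ n := by
      have := natDegree_derivative_le P
      omega
    rw [signRealization_succ]
    rcases ih hP' (σ := fun j => σ (j + 1)) with hsub | ⟨hT, hT'⟩
    · exact Or.inl (hsub.anti inter_subset_left)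
    · exact subsingleton_or_isOpen_ordConnected_of_sign_deriv_eq hT hT'
        P.differentiable.differentiableOn (fun _ hx => sign_deriv_eval_of_mem_signRealization hx)
        (σ 0)

end Polynomial

lemma eq_empty_or_eq_singleton_or_isOpen_nonempty_convex {S : Set ℝ}
    (h : S.Subsingleton ∨ IsOpen S ∧ S.OrdConnected) :
    S = ∅ ∨ (∃ a : ℝ, S = {a}) ∨ (IsOpen S ∧ S.Nonempty ∧ Convex ℝ S) := by
  rcases h with hsub | ⟨hopen, hconn⟩
  · exact hsub.eq_empty_or_singleton.imp_right Or.inl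
  · rcases S.eq_empty_or_nonempty with hempty | hne
    · exact Or.inl hempty
    · exact Or.inr (Or.inr ⟨hopen, hne, hconn.convex⟩)

theorem stmt_5 (P : Polynomial ℝ) (σ : ℕ → SignType)
    (S : Set ℝ)
    (hS : S = {x : ℝ | ∀ j ≤ P.natDegree,
      SignType.sign ((Polynomial.derivative^[j] P).eval x) = σ j}) :
    S = ∅ ∨ (∃ a : ℝ, S = {a}) ∨ (IsOpen S ∧ S.Nonempty ∧ Convex ℝ S) := by
  subst hS
  exact eq_empty_or_eq_singleton_or_isOpen_nonempty_convex
    (signRealization_subsingleton_or_isOpen_ordConnected le_rfl)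
end

section
/- Let P ∈ ℝ[X] be a nonzero univariate polynomial and let x, y ∈ ℝ be roots of P such that for every j with 0 ≤ j ≤ deg P, sign(P^{(j)}(x)) = sign(P^{(j)}(y)). Then x = y. (Roots of a polynomial are uniquely determined by their Thom encoding.) -/
/-!
Suppose `x < y`. Going down from `j = deg P`, where `P⁽ʲ⁾` is constant, the sign of `P⁽ʲ⁾` is
constant on `[x, y]` for every `j`: if `P⁽ʲ⁺¹⁾` has constant sign there, then `P⁽ʲ⁾` is monotone on
`[x, y]`, so its values lie between `P⁽ʲ⁾(x)` and `P⁽ʲ⁾(y)`, which have the same sign. For `j = 0`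
this makes `P` vanish on all of `[x, y]`, hence `P = 0`.
-/

open Polynomial Set

theorem sign_eq_of_mem_uIcc {α : Type*} [Zero α] [LinearOrder α] {a b c : α}
    (h : SignType.sign a = SignType.sign b) (hc : c ∈ uIcc a b) :
    SignType.sign c = SignType.sign a := by
  rcases mem_uIcc.mp hc with ⟨hac, hcb⟩ | ⟨hbc, hca⟩
  · exact le_antisymm (h ▸ SignType.sign.monotone hcb) (SignType.sign.monotone hac)
  · exact le_antisymm (SignType.sign.monotone hca) (h ▸ SignType.sign.monotone hbc)

theorem mapsTo_Icc_uIcc_of_sign_deriv_eq {f : ℝ → ℝ} {x y : ℝ} {s : SignType}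
    (hcont : ContinuousOn f (Icc x y)) (hdiff : DifferentiableOn ℝ f (Ioo x y))
    (hs : ∀ w ∈ Ioo x y, SignType.sign (deriv f w) = s) :
    MapsTo f (Icc x y) (uIcc (f x) (f y)) := by
  intro z hz
  have hx : x ∈ Icc x y := left_mem_Icc.mpr (hz.1.trans hz.2)
  have hy : y ∈ Icc x y := right_mem_Icc.mpr (hz.1.trans hz.2)
  rw [← interior_Icc] at hdiff hs
  by_cases hs0 : 0 ≤ s
  · have hmono : MonotoneOn f (Icc x y) := monotoneOn_of_deriv_nonneg (convex_Icc x y) hcont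
      hdiff fun w hw ↦ sign_nonneg_iff.mp ((hs w hw).symm ▸ hs0)
    exact mem_uIcc.mpr (.inl ⟨hmono hx hz hz.1, hmono hz hy hz.2⟩)
  · have hanti : AntitoneOn f (Icc x y) := antitoneOn_of_deriv_nonpos (convex_Icc x y) hcont
      hdiff fun w hw ↦ sign_nonpos_iff.mp ((hs w hw).symm ▸ (not_le.mp hs0).le)
    exact mem_uIcc.mpr (.inr ⟨hanti hz hy hz.2, hanti hx hz hz.1⟩)

theorem sign_eval_iterate_derivative_eq_of_mem_Icc (P : ℝ[X]) {x y : ℝ}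
    (hsign : ∀ j ≤ P.natDegree,
      SignType.sign ((derivative^[j] P).eval x) = SignType.sign ((derivative^[j] P).eval y))
    (j : ℕ) {z : ℝ} (hz : z ∈ Icc x y) :
    SignType.sign ((derivative^[j] P).eval z) = SignType.sign ((derivative^[j] P).eval x) := by
  induction hk : P.natDegree - j generalizing j z with
  | zero =>
    have hconst : (derivative^[j] P).natDegree = 0 := by
      have := natDegree_iterate_derivative P j
      omega
    rw [eq_C_of_natDegree_eq_zero hconst, eval_C, eval_C]
  | succ k ih =>
    have hderiv : ∀ w ∈ Ioo x y, SignType.sign (deriv (fun t ↦ (derivative^[j] P).eval t) w)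
        = SignType.sign ((derivative^[j + 1] P).eval x) := fun w hw ↦ by
      rw [Polynomial.deriv, ← Function.iterate_succ_apply' derivative]
      exact ih (j + 1) (Ioo_subset_Icc_self hw) (by omega)
    refine sign_eq_of_mem_uIcc (hsign j (by omega)) ?_
    exact mapsTo_Icc_uIcc_of_sign_deriv_eq (derivative^[j] P).continuousOn
      (derivative^[j] P).differentiableOn hderiv hz

theorem stmt_6_general (P : Polynomial ℝ) (hP : P ≠ 0) (x y : ℝ)
    (hx : P.eval x = 0)
    (hsign : ∀ j ≤ P.natDegree,
      SignType.sign ((Polynomial.derivative^[j] P).eval x)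
        = SignType.sign ((Polynomial.derivative^[j] P).eval y)) :
    x = y := by
  wlog hxy : x ≤ y generalizing x y
  · have hy : P.eval y = 0 := by simpa [hx] using (hsign 0 (Nat.zero_le _)).symm
    exact (this y x hy (fun j hj ↦ (hsign j hj).symm) (le_of_not_ge hxy)).symm
  refine hxy.eq_or_lt.resolve_right fun hlt ↦ hP (eq_zero_of_infinite_isRoot P ?_)
  refine (Icc_infinite hlt).mono fun z hz ↦ ?_
  simpa [hx] using sign_eval_iterate_derivative_eq_of_mem_Icc P hsign 0 hz

theorem stmt_6 (P : Polynomial ℝ) (hP : P ≠ 0) (x y : ℝ)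
    (hx : P.eval x = 0) (hy : P.eval y = 0)
    (hsign : ∀ j ≤ P.natDegree,
      SignType.sign ((Polynomial.derivative^[j] P).eval x)
        = SignType.sign ((Polynomial.derivative^[j] P).eval y)) :
    x = y :=
  stmt_6_general P hP x y hx hsign
end
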